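/- For r a nonzero integer, the infinite product C_r = (2/π) · Π_{p | r} (1 − 1/p²)^{−1} · Π_{p ∤ r} p(p² − p − 1) / ((p − 1)(p² − 1)), taken over primes p, converges to a positive real number. -/

import Mathlib

/-!
Each Euler factor is `1 + O(1/p²)`: for `p ∣ r` it is `1 + 1/(p² - 1)`, otherwise
`1 - 1/((p - 1)(p² - 1))`. Since `∑ 1/p²` converges, so does `∑ log` of the factors, and the
partial products tend to the exponential of that sum, which is positive.
-/

namespace Real

theorem exists_pos_hasProd_of_summable_sub_one {ι : Type*} {f : ι → ℝ} (hf : ∀ i, 0 < f i)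
    (hs : Summable fun i ↦ f i - 1) : ∃ L, 0 < L ∧ HasProd f L := by
  have hlog : Summable fun i ↦ log (f i) := by
    simpa using summable_log_one_add_of_summable hs
  exact ⟨_, exp_pos _, hasProd_of_hasSum_log hf hlog.hasSum⟩

end Real

theorem abs_inv_one_sub_one_div_sq_sub_one_le {x : ℝ} (hx : 2 ≤ x) :
    |(1 - 1 / x ^ 2)⁻¹ - 1| ≤ 2 / x ^ 2 := by
  have hD : 0 < x ^ 2 - 1 := by nlinarith
  have h : (1 - 1 / x ^ 2)⁻¹ - 1 = 1 / (x ^ 2 - 1) := by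
    rw [one_sub_div (by positivity), inv_div, div_sub_one hD.ne', sub_sub_cancel]
  rw [h, abs_of_pos (by positivity), div_le_div_iff₀ hD (by positivity)]
  nlinarith

theorem abs_mul_div_sub_one_le {x : ℝ} (hx : 2 ≤ x) :
    |x * (x ^ 2 - x - 1) / ((x - 1) * (x ^ 2 - 1)) - 1| ≤ 2 / x ^ 2 := by
  have hD : 0 < (x - 1) * (x ^ 2 - 1) := by nlinarith
  rw [div_sub_one hD.ne', show x * (x ^ 2 - x - 1) - (x - 1) * (x ^ 2 - 1) = -1 by ring,
    abs_div, abs_neg, abs_one, abs_of_pos hD, div_le_div_iff₀ hD (by positivity)]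
  nlinarith

noncomputable def localFactor (r : ℤ) (n : ℕ) : ℝ :=
  if n.Prime then
    if (n : ℤ) ∣ r then (1 - 1 / (n : ℝ) ^ 2)⁻¹
    else (n : ℝ) * ((n : ℝ) ^ 2 - n - 1) / (((n : ℝ) - 1) * ((n : ℝ) ^ 2 - 1))
  else 1

theorem abs_localFactor_sub_one_le (r : ℤ) (n : ℕ) : |localFactor r n - 1| ≤ 2 / (n : ℝ) ^ 2 := by
  by_cases hp : n.Prime
  · have hn : (2 : ℝ) ≤ n := mod_cast hp.two_le
    rw [localFactor, if_pos hp]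
    split_ifs
    · exact abs_inv_one_sub_one_div_sq_sub_one_le hn
    · exact abs_mul_div_sub_one_le hn
  · rw [localFactor, if_neg hp, sub_self, abs_zero]
    positivity

theorem localFactor_pos (r : ℤ) (n : ℕ) : 0 < localFactor r n := by
  by_cases hp : n.Prime
  · have hn : (2 : ℝ) ≤ n := mod_cast hp.two_le
    have hsmall : 2 / (n : ℝ) ^ 2 < 1 := by
      rw [div_lt_one (by positivity)]
      nlinarith
    linarith [(abs_lt.mp ((abs_localFactor_sub_one_le r n).trans_lt hsmall)).1]
  · simp [localFactor, hp]

theorem summable_localFactor_sub_one (r : ℤ) : Summable fun n ↦ localFactor r n - 1 := by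
  have h : Summable fun n : ℕ ↦ 2 / (n : ℝ) ^ 2 := by
    simpa [div_eq_mul_inv] using
      (Real.summable_one_div_nat_pow.mpr one_lt_two).mul_left 2
  exact h.of_norm_bounded (abs_localFactor_sub_one_le r)

theorem stmt_11_general (r : ℤ) :
    ∃ L : ℝ, 0 < L ∧
      Filter.Tendsto
        (fun N : ℕ => (2 / Real.pi) *
          ∏ p ∈ (Finset.range N).filter Nat.Prime,
            (if (p : ℤ) ∣ r then (1 - 1 / (p : ℝ) ^ 2)⁻¹
             else (p : ℝ) * ((p : ℝ) ^ 2 - p - 1) / (((p : ℝ) - 1) * ((p : ℝ) ^ 2 - 1))))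
        Filter.atTop (nhds L) := by
  obtain ⟨L, hL, hprod⟩ :=
    Real.exists_pos_hasProd_of_summable_sub_one (localFactor_pos r) (summable_localFactor_sub_one r)
  refine ⟨2 / Real.pi * L, by positivity [Real.pi_pos], ?_⟩
  simpa only [Finset.prod_filter, localFactor] using hprod.tendsto_prod_nat.const_mul (2 / Real.pi)

theorem stmt_11 (r : ℤ) (hr : r ≠ 0) :
    ∃ L : ℝ, 0 < L ∧
      Filter.Tendsto
        (fun N : ℕ => (2 / Real.pi) *
          ∏ p ∈ (Finset.range N).filter Nat.Prime,
            (if (p : ℤ) ∣ r then (1 - 1 / (p : ℝ) ^ 2)⁻¹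
             else (p : ℝ) * ((p : ℝ) ^ 2 - p - 1) / (((p : ℝ) - 1) * ((p : ℝ) ^ 2 - 1))))
        Filter.atTop (nhds L) :=
  stmt_11_general r
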